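/- arXiv:1904.11460 — 6 statements merged into one kernel-verified Lean document; each statement's English description precedes it below -/
import Mathlib

section
/- Let G be a finite group of order n, let φ : G → {−1,1} be a map, and let H be the G×G integer matrix with entries H_{g,h} = φ(g·h). If H·Hᵀ = n·I (that is, the group-developed matrix H is a Hadamard matrix), then n is a perfect square. -/
/-!
Sum all entries of `H * Hᵀ = n • 1`. The right side gives `n * n`. On the left, the total is
`∑ k, (column sum k)²`, and every column of a group-developed matrix is a permutation of the
values of `φ`, so each column sum is `s = ∑ g, φ g` and the total is `n * s²`. Hence `n = s²`.
-/

open Matrix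

namespace Matrix

variable {ι κ R : Type*} [Fintype ι] [Fintype κ]

theorem sum_sum_mul_transpose_apply [CommSemiring R] (A : Matrix ι κ R) :
    ∑ i, ∑ j, (A * Aᵀ) i j = ∑ k, (∑ i, A i k) ^ 2 := by
  simp only [mul_apply, transpose_apply, sq, Finset.sum_mul_sum]
  rw [Finset.sum_congr rfl fun i _ => Finset.sum_comm, Finset.sum_comm]

theorem sum_sum_smul_one_apply [NonAssocSemiring R] [DecidableEq ι] (c : R) :
    ∑ i, ∑ j, (c • (1 : Matrix ι ι R)) i j = Fintype.card ι * c := by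
  simp [one_apply]

theorem sq_eq_of_mul_transpose_eq_smul_one [Nonempty ι] [DecidableEq ι] [CommRing R]
    [NoZeroDivisors R] [CharZero R] {A : Matrix ι ι R} {s c : R}
    (hcol : ∀ k, ∑ i, A i k = s) (hA : A * Aᵀ = c • 1) : s ^ 2 = c := by
  have hsum := sum_sum_mul_transpose_apply A
  rw [hA, sum_sum_smul_one_apply] at hsum
  simp only [hcol, Finset.sum_const, Finset.card_univ, nsmul_eq_mul] at hsum
  exact (mul_left_cancel₀ (Nat.cast_ne_zero.mpr Fintype.card_ne_zero) hsum).symm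

end Matrix

theorem stmt1_general {G : Type*} [Group G] [Fintype G] [DecidableEq G]
    (φ : G → ℤ)
    (hHad : (Matrix.of fun g h : G => φ (g * h)) * (Matrix.of fun g h : G => φ (g * h))ᵀ
        = (Fintype.card G : ℤ) • (1 : Matrix G G ℤ)) :
    IsSquare (Fintype.card G) := by
  have hcol (h : G) : ∑ g, (of fun g h : G => φ (g * h)) g h = ∑ g, φ g :=
    Equiv.sum_comp (Equiv.mulRight h) φ
  have hsq := sq_eq_of_mul_transpose_eq_smul_one hcol hHad
  exact ⟨(∑ g, φ g).natAbs, Int.ofNat_inj.mp (by rw [Int.natAbs_mul_self, ← sq, hsq])⟩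

/-- if the group-developed matrix `H = [φ(g·h)]` over a finite group `G`
of order `n` (with `φ` taking values in `{−1,1}`) satisfies `H·Hᵀ = n·I`, then `n` is
a perfect square. -/
theorem stmt1 {G : Type*} [Group G] [Fintype G] [DecidableEq G]
    (φ : G → ℤ) (hpm : ∀ g, φ g = 1 ∨ φ g = -1)
    (hHad : (Matrix.of fun g h : G => φ (g * h)) * (Matrix.of fun g h : G => φ (g * h))ᵀ
        = (Fintype.card G : ℤ) • (1 : Matrix G G ℤ)) :
    IsSquare (Fintype.card G) :=
  stmt1_general φ hHad
end

section
/- Let p > 3 be a prime, let G be a group of order 4p, and let ψ be a 2-cocycle on G with values in ⟨±1⟩ such that the G×G matrix [ψ(g,h)]_{g,h∈G} is a Hadamard matrix. Let (E, z, σ) be a realization of the central extension E_ψ (so E has order 8p). Then no Sylow 2-subgroup of E is cyclic, and no Sylow 2-subgroup of E is isomorphic to the dihedral group of order 8. -/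
/-!
The image `D = σ(G)` satisfies `E = D ⊔ D z`, and orthogonality of the columns of `[ψ(g,h)]`
to the all-ones column `ψ(·,1)` gives `N(e) := #{y ∈ D | y e ∈ D} = 2p` for every `e ∉ {1, z}`.
Split `E` into the `p` left cosets of a Sylow `2`-subgroup `P ∋ z` and count coset by coset.
If `P` is cyclic or dihedral of order `8`, a finite check over all `2`-colourings of `P` that
are swapped by `z` shows that, for two suitable `x₁, x₂ ∈ P`, each coset contributes `2`
modulo `4` to `N(x₁) + N(x₂)`; hence `4p = N(x₁) + N(x₂) ≡ 2p ≡ 2 (mod 4)`, a contradiction.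
-/

open Matrix

/-- Entries of a matrix are all ±1. -/
def IsPM {m n : Type*} (A : Matrix m n ℤ) : Prop := ∀ i j, A i j = 1 ∨ A i j = -1

/-- A Hadamard matrix: ±1 entries and `H·Hᵀ = n·I`. -/
def IsHadamard {n : Type*} [Fintype n] [DecidableEq n] (H : Matrix n n ℤ) : Prop :=
  IsPM H ∧ H * Hᵀ = (Fintype.card n : ℤ) • (1 : Matrix n n ℤ)

open Finset

theorem Matrix.mul_eq_smul_one_comm {n R : Type*} [Fintype n] [DecidableEq n] [CommRing R]
    [IsDomain R] {A B : Matrix n n R} {r : R} (hr : r ≠ 0) (h : A * B = r • 1) :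
    B * A = r • 1 := by
  have hdet : B.det ≠ 0 := by
    refine right_ne_zero_of_mul (a := A.det) ?_
    rw [← det_mul, h, det_smul, det_one, mul_one]
    exact pow_ne_zero _ hr
  have hker : (B * A - r • 1) * B = 0 := by
    rw [Matrix.sub_mul, Matrix.mul_assoc, h, Matrix.mul_smul, Matrix.smul_mul, Matrix.mul_one,
      Matrix.one_mul, sub_self]
  have := congrArg (· * B.adjugate) hker
  simp only [Matrix.mul_assoc, mul_adjugate, Matrix.mul_smul, Matrix.mul_one,
    Matrix.zero_mul] at this
  exact sub_eq_zero.mp ((smul_eq_zero.mp this).resolve_left hdet)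

theorem IsHadamard.transpose_mul_self {n : Type*} [Fintype n] [DecidableEq n] [Nonempty n]
    {H : Matrix n n ℤ} (hH : _root_.IsHadamard H) : Hᵀ * H = (Fintype.card n : ℤ) • 1 :=
  mul_eq_smul_one_comm (by exact_mod_cast Fintype.card_ne_zero) hH.2

theorem IsHadamard.sum_col_eq_zero {n : Type*} [Fintype n] [DecidableEq n] {H : Matrix n n ℤ}
    (hH : _root_.IsHadamard H) {j₀ : n} (hj₀ : ∀ i, H i j₀ = 1) {j : n} (hj : j ≠ j₀) :
    ∑ i, H i j = 0 := by
  have : Nonempty n := ⟨j₀⟩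
  simpa [mul_apply, hj₀, one_apply_ne hj] using congrFun (congrFun hH.transpose_mul_self j) j₀

theorem two_mul_card_filter_eq_card {ι : Type*} [Fintype ι] {f : ι → ℤ}
    (hf : ∀ i, f i = 1 ∨ f i = -1) (hsum : ∑ i, f i = 0) {s : ℤ} (hs : s = 1 ∨ s = -1) :
    2 * #{i | f i = s} = Fintype.card ι := by
  have hite : ∀ i, f i = if f i = s then s else -s := by
    intro i; rcases hf i with h | h <;> rcases hs with rfl | rfl <;> simp [h]
  rw [sum_congr rfl fun i _ => hite i, sum_ite, sum_const, sum_const] at hsum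
  have hcard := card_filter_add_card_filter_not (s := univ) (p := fun i => f i = s)
  rw [card_univ] at hcard
  rcases hs with rfl | rfl <;> simp at hsum <;> omega

theorem Sylow.card_eq_pow_of_card_eq_mul {G : Type*} [Group G] [Finite G] {p : ℕ}
    [hp : Fact p.Prime] (P : Sylow p G) {k m : ℕ} (hG : Nat.card G = p ^ k * m)
    (hm : ¬ p ∣ m) : Nat.card P = p ^ k := by
  rw [P.card_eq_multiplicity, hG, Nat.factorization_mul (pow_ne_zero _ hp.out.ne_zero)
    (by rintro rfl; exact hm (dvd_zero p)), Finsupp.add_apply, hp.out.factorization_pow,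
    Finsupp.single_eq_same, Nat.factorization_eq_zero_of_not_dvd hm, add_zero]

theorem Sylow.mem_of_mem_center {G : Type*} [Group G] {p : ℕ} [Fact p.Prime] (P : Sylow p G)
    {z : G} (hzc : z ∈ Subgroup.center G) (hz : z ^ p = 1) : z ∈ P := by
  have : (Subgroup.zpowers z).Normal := ⟨fun n hn g => by
    obtain ⟨k, rfl⟩ := Subgroup.mem_zpowers_iff.mp hn
    rwa [Subgroup.mem_center_iff.mp (Subgroup.zpow_mem _ hzc k) g, mul_inv_cancel_right]⟩
  have hpgroup : IsPGroup p (Subgroup.zpowers z) :=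
    IsPGroup.of_card_dvd_pow (n := 1) (by
      rw [Nat.card_zpowers, pow_one]; exact orderOf_dvd_of_pow_eq_one hz)
  exact hpgroup.le_sylow_of_normal P (Subgroup.mem_zpowers z)

theorem card_filter_eq_sum_quotient {E Q : Type*} [Group E] [Fintype E] (P : Subgroup E)
    [Fintype (E ⧸ P)] [Fintype Q] (φ : Q ≃ P) (A : E → Prop) [DecidablePred A] :
    #{y | A y} = ∑ q : E ⧸ P, #{w | A (q.out * φ w)} := by
  classical
  rw [card_eq_sum_card_fiberwise (f := (QuotientGroup.mk : E → E ⧸ P)) (t := univ)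
    fun _ _ => mem_univ _]
  refine sum_congr rfl fun q _ => (card_nbij (fun w => q.out * φ w) ?_ ?_ ?_).symm
  · intro w hw
    simp only [coe_filter, Set.mem_ofPred_eq, mem_filter, mem_univ, true_and] at hw ⊢
    exact ⟨hw, by rw [QuotientGroup.mk_mul_of_mem _ (φ w).2, QuotientGroup.out_eq']⟩
  · intro w _ w' _ h
    exact φ.injective (Subtype.ext (mul_left_cancel h))
  · intro y hy
    simp only [coe_filter, Set.mem_ofPred_eq, mem_filter, mem_univ, true_and] at hy
    have hmem : q.out⁻¹ * y ∈ P := by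
      rw [← QuotientGroup.eq, QuotientGroup.out_eq', hy.2]
    refine ⟨φ.symm ⟨_, hmem⟩, ?_, ?_⟩ <;> simp [hy.1]

def IsMod4Obstruction (Q : Type*) [Group Q] [Fintype Q] [DecidableEq Q] (S : Finset Q) : Prop :=
  1 ∉ S ∧ #S = 2 ∧ ∀ c ∈ Subgroup.center Q, c ^ 2 = 1 → c ≠ 1 → c ∉ S ∧
    ∀ f : Q → Bool, (∀ w, f (w * c) = !f w) → (∑ x ∈ S, #{w | f w && f (w * x)}) % 4 = 2

theorem isMod4Obstruction_zmod :
    IsMod4Obstruction (Multiplicative (ZMod 8))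
      {Multiplicative.ofAdd 1, Multiplicative.ofAdd (-1)} := by
  unfold IsMod4Obstruction
  set_option maxRecDepth 10000 in decide

theorem isMod4Obstruction_dihedralGroup :
    IsMod4Obstruction (DihedralGroup 4) {DihedralGroup.sr 0, DihedralGroup.sr 1} := by
  unfold IsMod4Obstruction
  set_option maxRecDepth 10000 in decide

theorem not_nonempty_mulEquiv_of_isMod4Obstruction {E : Type*} [Group E] [Fintype E]
    [DecidableEq E] (D : Finset E) {z : E} (hzc : z ∈ Subgroup.center E) (hz1 : z ≠ 1)
    (hz2 : z ^ 2 = 1) (hflip : ∀ y, y * z ∈ D ↔ y ∉ D) {m : ℕ}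
    (hD : ∀ e, e ≠ 1 → e ≠ z → #{y ∈ D | y * e ∈ D} = 2 * m)
    {P : Subgroup E} (hP : Odd P.index) (hzP : z ∈ P)
    {Q : Type*} [Group Q] [Fintype Q] [DecidableEq Q] {S : Finset Q}
    (hS : IsMod4Obstruction Q S) : ¬ Nonempty (P ≃* Q) := by
  classical
  rintro ⟨φ⟩
  obtain ⟨hS1, hS2, hSc⟩ := hS
  set c := φ ⟨z, hzP⟩ with hc
  have hcz : (φ.symm c : E) = z := by simp [c]
  have hcc : c ∈ Subgroup.center Q := MulEquivClass.apply_mem_center φ <|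
    Subgroup.mem_center_iff.mpr fun v => Subtype.ext (Subgroup.mem_center_iff.mp hzc v)
  have hc2 : c ^ 2 = 1 := by rw [hc, ← map_pow]; simp [Subtype.ext_iff, hz2]
  have hc1 : c ≠ 1 := by simp [c, Subtype.ext_iff, hz1]
  obtain ⟨hcS, hlocal⟩ := hSc c hcc hc2 hc1
  set f : E ⧸ P → Q → Bool := fun q w => decide (q.out * (φ.symm w : E) ∈ D)
  have hf : ∀ q w, f q (w * c) = !f q w := fun q w => by
    simp [f, ← mul_assoc, hcz, hflip]
  have hglobal : ∑ x ∈ S, #{y ∈ D | y * (φ.symm x : E) ∈ D} =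
      ∑ q, ∑ x ∈ S, #{w | f q w && f q (w * x)} := by
    rw [sum_comm]
    refine sum_congr rfl fun x _ => ?_
    have hD' : #{y ∈ D | y * (φ.symm x : E) ∈ D} =
        #{y | y ∈ D ∧ y * (φ.symm x : E) ∈ D} := by
      congr 1; ext; simp
    rw [hD', card_filter_eq_sum_quotient P φ.symm.toEquiv]
    simp [f, mul_assoc]
  have hlhs : ∑ x ∈ S, #{y ∈ D | y * (φ.symm x : E) ∈ D} = 4 * m := by
    rw [sum_congr rfl fun x hx => hD _ ?_ ?_, sum_const, hS2, smul_eq_mul]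
    · ring
    · exact fun h => hS1 <| by
        rwa [← (map_eq_one_iff φ.symm φ.symm.injective).mp (Subtype.ext h)]
    · exact fun h => hcS (by rwa [φ.symm.injective (Subtype.ext (hcz.trans h.symm))])
  have hrhs : (∑ q, ∑ x ∈ S, #{w | f q w && f q (w * x)}) % 4 = 2 := by
    rw [sum_nat_mod, sum_congr rfl fun q _ => hlocal (f q) (hf q), sum_const, card_univ,
      ← Nat.card_eq_fintype_card, ← Subgroup.index, smul_eq_mul]
    obtain ⟨k, hk⟩ := hP
    omega
  omega

structure IsRealization {G E : Type*} [Group G] [Group E] (ψ : G → G → ℤ) (z : E)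
    (σ : G → E) : Prop where
  mem_center : z ∈ Subgroup.center E
  ne_one : z ≠ 1
  sq_eq_one : z ^ 2 = 1
  map_one : σ 1 = 1
  bijective : Function.Bijective fun gi : G × ZMod 2 => σ gi.1 * z ^ gi.2.val
  mul_of_eq_one : ∀ g h, ψ g h = 1 → σ g * σ h = σ (g * h)
  mul_of_eq_neg_one : ∀ g h, ψ g h = -1 → σ g * σ h = σ (g * h) * z

namespace IsRealization

variable {G E : Type*} [Group G] [Group E] {ψ : G → G → ℤ} {z : E} {σ : G → E}

theorem injective (hR : IsRealization ψ z σ) : Function.Injective σ := fun a b hab =>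
  congrArg Prod.fst (hR.bijective.injective (a₁ := (a, 0)) (a₂ := (b, 0)) (by simpa using hab))

theorem mul_ne (hR : IsRealization ψ z σ) (g g' : G) : σ g * z ≠ σ g' := fun h =>
  zero_ne_one (congrArg Prod.snd (hR.bijective.injective (a₁ := (g', 0)) (a₂ := (g, 1))
    (by simpa [ZMod.val_one] using h.symm)))

theorem exists_eq_or_eq_mul (hR : IsRealization ψ z σ) (e : E) :
    ∃ a, e = σ a ∨ e = σ a * z := by
  obtain ⟨⟨a, i⟩, rfl⟩ := hR.bijective.surjective e
  refine ⟨a, ?_⟩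
  have hi : i.val = 0 ∨ i.val = 1 := by have := ZMod.val_lt i; omega
  rcases hi with hi | hi <;> simp [hi]

theorem card_eq [Finite G] (hR : IsRealization ψ z σ) : Nat.card E = Nat.card G * 2 := by
  rw [← Nat.card_eq_of_bijective _ hR.bijective, Nat.card_prod, Nat.card_zmod]

theorem mul_mem_range_iff (hR : IsRealization ψ z σ) (y : E) :
    y * z ∈ Set.range σ ↔ y ∉ Set.range σ := by
  obtain ⟨a, rfl | rfl⟩ := hR.exists_eq_or_eq_mul y
  · simpa using fun g => (hR.mul_ne a g).symm
  · simp only [mul_assoc, ← sq, hR.sq_eq_one, mul_one, Set.mem_range_self, true_iff]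
    rintro ⟨g, hg⟩
    exact hR.mul_ne a g hg.symm

theorem mul_mem_range_iff_eq_one (hR : IsRealization ψ z σ)
    (hψ : ∀ g h, ψ g h = 1 ∨ ψ g h = -1) (g h : G) :
    σ g * σ h ∈ Set.range σ ↔ ψ g h = 1 := by
  rcases hψ g h with hgh | hgh
  · simp [hR.mul_of_eq_one g h hgh, hgh]
  · simp [hR.mul_of_eq_neg_one g h hgh, hR.mul_mem_range_iff, hgh]

theorem exists_card_filter_mul_mem_image_eq [Fintype G] [DecidableEq E]
    (hR : IsRealization ψ z σ)
    (hψ : ∀ g h, ψ g h = 1 ∨ ψ g h = -1) {e : E} (he1 : e ≠ 1) (hez : e ≠ z) :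
    ∃ a ≠ 1, ∃ s, (s = 1 ∨ s = -1) ∧
      #{y ∈ univ.image σ | y * e ∈ univ.image σ} = #{g | ψ g a = s} := by
  classical
  have hcard : #{y ∈ univ.image σ | y * e ∈ univ.image σ} =
      #{g | σ g * e ∈ Set.range σ} := by
    rw [filter_image, card_image_of_injective _ hR.injective]
    simp
  rw [hcard]
  obtain ⟨a, rfl | rfl⟩ := hR.exists_eq_or_eq_mul e
  · refine ⟨a, fun ha => he1 (by rw [ha, hR.map_one]), 1, .inl rfl, ?_⟩
    simp only [hR.mul_mem_range_iff_eq_one hψ]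
  · refine ⟨a, fun ha => hez (by rw [ha, hR.map_one, one_mul]), -1, .inr rfl, ?_⟩
    congr 1
    refine filter_congr fun g _ => ?_
    rw [← mul_assoc, hR.mul_mem_range_iff, hR.mul_mem_range_iff_eq_one hψ]
    exact ⟨(hψ g a).resolve_left, fun h h1 => by simp [h1] at h⟩

theorem two_mul_card_filter_mul_mem_image [Fintype G] [DecidableEq G] [DecidableEq E]
    (hR : IsRealization ψ z σ) (hψ : ∀ g h, ψ g h = 1 ∨ ψ g h = -1) (hψ1 : ∀ g, ψ g 1 = 1)
    (hH : _root_.IsHadamard (Matrix.of fun g h => ψ g h)) {e : E} (he1 : e ≠ 1)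
    (hez : e ≠ z) : 2 * #{y ∈ univ.image σ | y * e ∈ univ.image σ} = Fintype.card G := by
  obtain ⟨a, ha, s, hs, hcard⟩ := hR.exists_card_filter_mul_mem_image_eq hψ he1 hez
  rw [hcard]
  exact two_mul_card_filter_eq_card (hψ · a) (hH.sum_col_eq_zero (j₀ := 1) hψ1 ha) hs

end IsRealization

theorem stmt2_general (p : ℕ) (hp : p.Prime) (hp3 : 3 < p)
    {G : Type*} [Group G] [Fintype G] [DecidableEq G] (hG : Fintype.card G = 4 * p)
    (ψ : G → G → ℤ)
    (hψpm : ∀ g h, ψ g h = 1 ∨ ψ g h = -1)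
    (hψ1r : ∀ g, ψ g 1 = 1)
    (hHad : _root_.IsHadamard (Matrix.of fun g h => ψ g h))
    {E : Type*} [Group E] [Fintype E]
    (z : E) (hzc : z ∈ Subgroup.center E) (hz1 : z ≠ 1) (hz2 : z ^ 2 = 1)
    (σ : G → E) (hσ1 : σ 1 = 1)
    (hbij : Function.Bijective fun gi : G × ZMod 2 => σ gi.1 * z ^ (gi.2.val))
    (hmul1 : ∀ g h, ψ g h = 1 → σ g * σ h = σ (g * h))
    (hmul2 : ∀ g h, ψ g h = -1 → σ g * σ h = σ (g * h) * z) :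
    ∀ P : Sylow 2 E, ¬ IsCyclic (P : Subgroup E) ∧
      ¬ Nonempty ((P : Subgroup E) ≃* DihedralGroup 4) := by
  classical
  intro P
  have hR : IsRealization ψ z σ := ⟨hzc, hz1, hz2, hσ1, hbij, hmul1, hmul2⟩
  have hp_odd : Odd p := hp.odd_of_ne_two (by omega)
  have hD (e : E) (he1 : e ≠ 1) (hez : e ≠ z) :
      #{y ∈ univ.image σ | y * e ∈ univ.image σ} = 2 * p := by
    have := hR.two_mul_card_filter_mul_mem_image hψpm hψ1r hHad he1 hez
    omega
  have hflip (y : E) : y * z ∈ univ.image σ ↔ y ∉ univ.image σ := by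
    simpa using hR.mul_mem_range_iff y
  have hobstruction {Q : Type} [Group Q] [Fintype Q] [DecidableEq Q] {S : Finset Q}
      (hS : IsMod4Obstruction Q S) : ¬ Nonempty (P ≃* Q) :=
    not_nonempty_mulEquiv_of_isMod4Obstruction _ hzc hz1 hz2 hflip hD
      (Nat.odd_iff.mpr (Nat.two_dvd_ne_zero.mp P.not_dvd_index)) (P.mem_of_mem_center hzc hz2) hS
  refine ⟨fun hcyclic => hobstruction isMod4Obstruction_zmod ⟨mulEquivOfCyclicCardEq ?_⟩,
    hobstruction isMod4Obstruction_dihedralGroup⟩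
  have hcardE : Nat.card E = 2 ^ 3 * p := by
    rw [hR.card_eq, Nat.card_eq_fintype_card, hG]; ring
  rw [P.card_eq_pow_of_card_eq_mul hcardE (by simpa [← even_iff_two_dvd] using hp_odd),
    Nat.card_eq_fintype_card, Fintype.card_multiplicative, ZMod.card]
  rfl

/-- if `p > 3` is prime, `G` a group of order `4p`, `ψ` a 2-cocycle on `G`
with values in `{±1}` such that `[ψ(g,h)]` is a Hadamard matrix, and `(E,z,σ)` is a
realization of the central extension `E_ψ`, then no Sylow 2-subgroup of `E` is cyclic
and none is isomorphic to the dihedral group of order 8. -/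
theorem stmt2 (p : ℕ) (hp : p.Prime) (hp3 : 3 < p)
    {G : Type*} [Group G] [Fintype G] [DecidableEq G] (hG : Fintype.card G = 4 * p)
    (ψ : G → G → ℤ)
    (hψpm : ∀ g h, ψ g h = 1 ∨ ψ g h = -1)
    (hψ1r : ∀ g, ψ g 1 = 1) (hψ1l : ∀ g, ψ 1 g = 1)
    (hψcoc : ∀ g h k, ψ g (h * k) * ψ h k = ψ g h * ψ (g * h) k)
    (hHad : _root_.IsHadamard (Matrix.of fun g h => ψ g h))
    {E : Type*} [Group E] [Fintype E]
    (z : E) (hzc : z ∈ Subgroup.center E) (hz1 : z ≠ 1) (hz2 : z ^ 2 = 1)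
    (σ : G → E) (hσ1 : σ 1 = 1)
    (hbij : Function.Bijective fun gi : G × ZMod 2 => σ gi.1 * z ^ (gi.2.val))
    (hmul1 : ∀ g h, ψ g h = 1 → σ g * σ h = σ (g * h))
    (hmul2 : ∀ g h, ψ g h = -1 → σ g * σ h = σ (g * h) * z) :
    ∀ P : Sylow 2 E, ¬ IsCyclic (P : Subgroup E) ∧
      ¬ Nonempty ((P : Subgroup E) ≃* DihedralGroup 4) :=
  stmt2_general p hp hp3 hG ψ hψpm hψ1r hHad z hzc hz1 hz2 σ hσ1 hbij hmul1 hmul2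
end

section
/- Let p > 3 be a prime, let w,x,y,z : ZMod p → {−1,1}, let a,b ∈ {τ,ι} be flags and r,s,t ∈ {0,1}, and suppose H = 𝓗(W,X,Y,Z)^{a,b}_{r,s,t} is a Hadamard matrix (W = BC(w), etc.). Then H is Hadamard equivalent to each of 𝓗(Y,Z,W,X)^{a,b}_{r,s,t}, 𝓗(X,W,Z,Y)^{a,b}_{r,s,t}, 𝓗(Z,Y,X,W)^{a,b}_{r,s,t}, and, for any α,β,γ,δ ∈ {−1,1} with α·β·γ·δ = 1, to 𝓗(αW, βX, γY, δZ)^{a,b}_{r,s,t}. -/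
open Matrix

/-- A signed permutation matrix: exactly one nonzero entry (which is ±1) in each
row and each column. -/
def IsSignedPerm {n : Type*} [DecidableEq n] (P : Matrix n n ℤ) : Prop :=
  ∃ (σ : Equiv.Perm n) (ε : n → ℤ), (∀ i, ε i = 1 ∨ ε i = -1) ∧
    P = Matrix.of fun i j => if σ i = j then ε i else 0

/-- Hadamard equivalence of ±1 matrices. -/
def HadEquiv {n : Type*} [Fintype n] [DecidableEq n] (A B : Matrix n n ℤ) : Prop :=
  ∃ P Q : Matrix n n ℤ, IsSignedPerm P ∧ IsSignedPerm Q ∧ A = P * B * Q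

/-- The back-circulant matrix `BC(u)` with entries `u (i + j)`. -/
def BC {p : ℕ} (u : ZMod p → ℤ) : Matrix (ZMod p) (ZMod p) ℤ :=
  Matrix.of fun i j => u (i + j)

/-- The circulant matrix `C(u)` with entries `u (j - i)`. -/
def Cir {p : ℕ} (u : ZMod p → ℤ) : Matrix (ZMod p) (ZMod p) ℤ :=
  Matrix.of fun i j => u (j - i)

/-- A flag `τ` or `ι`. -/
inductive Flg | tau | iota
  deriving DecidableEq

/-- Flg multiplication: `ττ = ιι = τ` and `τι = ιτ = ι`. -/
instance : Mul Flg :=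
  ⟨fun a b => match a, b with
    | .tau, c => c
    | .iota, .tau => .iota
    | .iota, .iota => .tau⟩

/-- `BC(u)^c`: the flag `τ` gives the back-circulant matrix `BC(u)`, the flag `ι`
gives the circulant matrix `C(u)` with the same first row. -/
def flagM {p : ℕ} (c : Flg) (u : ZMod p → ℤ) : Matrix (ZMod p) (ZMod p) ℤ :=
  match c with
  | .tau => BC u
  | .iota => Cir u

/-- The `4p × 4p` block matrix `𝓗(W,X,Y,Z)^{a,b}_{r,s,t}` with `W = BC w`, `X = BC x`,
`Y = BC y`, `Z = BC z` back-circulant `p × p` blocks. -/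
def HBlock {p : ℕ} (w x y z : ZMod p → ℤ) (a b : Flg) (r s t : ℕ) :
    Matrix (Fin 4 × ZMod p) (Fin 4 × ZMod p) ℤ :=
  Matrix.of fun ik jl =>
    (!![BC w, flagM a x, flagM b y, flagM (a * b) z;
        BC x, ((-1 : ℤ) ^ r) • flagM a w, flagM b z, ((-1 : ℤ) ^ r) • flagM (a * b) y;
        BC y, ((-1 : ℤ) ^ t) • flagM a z, ((-1 : ℤ) ^ s) • flagM b w,
          ((-1 : ℤ) ^ (s + t)) • flagM (a * b) x;
        BC z, ((-1 : ℤ) ^ (r + t)) • flagM a y, ((-1 : ℤ) ^ s) • flagM b x,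
          ((-1 : ℤ) ^ (r + s + t)) • flagM (a * b) w] ik.1 jl.1) ik.2 jl.2

/-!
Every equivalence is realised blockwise: multiplying on the left by a signed permutation that
permutes the four block rows (by a product of two disjoint transpositions) and rescales them,
and on the right by a diagonal of block-column signs. The signs are chosen so that each block
of the target is sent to the corresponding block of `𝓗(W,X,Y,Z)`; they cancel in pairs since
`(-1)^(2m) = 1` and `u² = 1` for every unit `u` of `ℤ`.
-/

section SignedPerm

variable {n : Type*} [DecidableEq n]

lemma isSignedPerm_of_units (σ : Equiv.Perm n) (ε : n → ℤˣ) :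
    IsSignedPerm (Matrix.of fun i j => if σ i = j then (ε i : ℤ) else 0) :=
  ⟨σ, fun i => ε i, fun i => Int.isUnit_iff.mp (ε i).isUnit, rfl⟩

variable [Fintype n]

lemma signedPerm_mul_apply (σ : Equiv.Perm n) (ε : n → ℤ) (B : Matrix n n ℤ) (i j : n) :
    ((Matrix.of fun i j => if σ i = j then ε i else 0) * B) i j = ε i * B (σ i) j := by
  simp [Matrix.mul_apply, ite_mul]

theorem hadEquiv_of_apply_eq {A B : Matrix n n ℤ} (σ : Equiv.Perm n) (ε η : n → ℤˣ)
    (h : ∀ i j, A i j = ε i * B (σ i) j * η j) : HadEquiv A B := by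
  refine ⟨_, _, isSignedPerm_of_units σ ε, isSignedPerm_of_units (Equiv.refl n) η, ?_⟩
  ext i j
  rw [h, Matrix.mul_apply, Finset.sum_eq_single j (fun k _ hk => by simp [hk]) (by simp)]
  simp [signedPerm_mul_apply]

end SignedPerm

theorem hadEquiv_of_blockwise_apply_eq {ι m : Type*} [Fintype ι] [DecidableEq ι] [Fintype m]
    [DecidableEq m] {A B : Matrix (ι × m) (ι × m) ℤ} (σ : Equiv.Perm ι) (ε η : ι → ℤˣ)
    (h : ∀ i k j l, A (i, k) (j, l) = ε i * B (σ i, k) (j, l) * η j) : HadEquiv A B :=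
  hadEquiv_of_apply_eq (σ.prodCongr (Equiv.refl m)) (ε ∘ Prod.fst) (η ∘ Prod.fst)
    fun ⟨i, k⟩ ⟨j, l⟩ => h i k j l

section HBlock

variable {p : ℕ}

lemma flagM_smul (c : Flg) (α : ℤ) (u : ZMod p → ℤ) : flagM c (α • u) = α • flagM c u := by
  cases c <;> rfl

lemma BC_smul (α : ℤ) (u : ZMod p → ℤ) : BC (α • u) = α • BC u := rfl

variable [NeZero p] (w x y z : ZMod p → ℤ) (a b : Flg) (r s t : ℕ)

theorem hadEquiv_HBlock_yzwx :
    HadEquiv (HBlock w x y z a b r s t) (HBlock y z w x a b r s t) := by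
  refine hadEquiv_of_blockwise_apply_eq (Equiv.swap 0 2 * Equiv.swap 1 3) 1
    ![1, (-1) ^ t, (-1) ^ s, (-1) ^ (s + t)] fun i k j l => ?_
  fin_cases i <;> fin_cases j <;>
    simp only [HBlock, Matrix.of_apply, Matrix.cons_val, Matrix.smul_apply, Equiv.Perm.coe_mul,
      Function.comp_apply, Equiv.swap_apply_def, ↓reduceIte, Fin.reduceFinMk, Fin.reduceEq,
      Units.val_pow_eq_pow_val, Units.val_neg] <;>
    ring_nf <;> simp [pow_mul']

theorem hadEquiv_HBlock_xwzy :
    HadEquiv (HBlock w x y z a b r s t) (HBlock x w z y a b r s t) := by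
  refine hadEquiv_of_blockwise_apply_eq (Equiv.swap 0 1 * Equiv.swap 2 3) 1
    ![1, (-1) ^ r, 1, (-1) ^ r] fun i k j l => ?_
  fin_cases i <;> fin_cases j <;>
    simp only [HBlock, Matrix.of_apply, Matrix.cons_val, Matrix.smul_apply, Equiv.Perm.coe_mul,
      Function.comp_apply, Equiv.swap_apply_def, ↓reduceIte, Fin.reduceFinMk, Fin.reduceEq,
      Units.val_pow_eq_pow_val, Units.val_neg] <;>
    ring_nf <;> simp [pow_mul']

theorem hadEquiv_HBlock_zyxw :
    HadEquiv (HBlock w x y z a b r s t) (HBlock z y x w a b r s t) := by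
  refine hadEquiv_of_blockwise_apply_eq (Equiv.swap 0 3 * Equiv.swap 1 2) 1
    ![1, (-1) ^ (r + t), (-1) ^ s, (-1) ^ (r + s + t)] fun i k j l => ?_
  fin_cases i <;> fin_cases j <;>
    simp only [HBlock, Matrix.of_apply, Matrix.cons_val, Matrix.smul_apply, Equiv.Perm.coe_mul,
      Function.comp_apply, Equiv.swap_apply_def, ↓reduceIte, Fin.reduceFinMk, Fin.reduceEq,
      Units.val_pow_eq_pow_val, Units.val_neg] <;>
    ring_nf <;> simp [pow_mul']

theorem hadEquiv_HBlock_smul (α β γ δ : ℤˣ) (h : α * β * γ * δ = 1) :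
    HadEquiv (HBlock w x y z a b r s t)
      (HBlock ((α : ℤ) • w) ((β : ℤ) • x) ((γ : ℤ) • y) ((δ : ℤ) • z) a b r s t) := by
  obtain rfl : δ = α * β * γ := by
    rw [← Int.units_inv_eq_self (α * β * γ)]
    exact (inv_eq_of_mul_eq_one_right h).symm
  refine hadEquiv_of_blockwise_apply_eq 1 ![α, β, γ, α * β * γ] ![1, α * β, α * γ, β * γ]
    fun i k j l => ?_
  fin_cases i <;> fin_cases j <;>
    simp only [HBlock, Matrix.of_apply, Matrix.cons_val, Matrix.smul_apply, Equiv.Perm.coe_one,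
      id, flagM_smul, BC_smul, Fin.reduceFinMk, Units.val_mul] <;>
    ring_nf <;> simp [← Units.val_pow_eq_pow_val]

end HBlock

theorem stmt6_general (p : ℕ) [NeZero p]
    (w x y z : ZMod p → ℤ)
    (a b : Flg) (r s t : ℕ) :
    HadEquiv (HBlock w x y z a b r s t) (HBlock y z w x a b r s t) ∧
    HadEquiv (HBlock w x y z a b r s t) (HBlock x w z y a b r s t) ∧
    HadEquiv (HBlock w x y z a b r s t) (HBlock z y x w a b r s t) ∧
    ∀ α β γ δ : ℤ, (α = 1 ∨ α = -1) → (β = 1 ∨ β = -1) →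
      (γ = 1 ∨ γ = -1) → (δ = 1 ∨ δ = -1) → α * β * γ * δ = 1 →
      HadEquiv (HBlock w x y z a b r s t)
        (HBlock (α • w) (β • x) (γ • y) (δ • z) a b r s t) := by
  refine ⟨hadEquiv_HBlock_yzwx .., hadEquiv_HBlock_xwzy .., hadEquiv_HBlock_zyxw .., ?_⟩
  intro α β γ δ hα hβ hγ hδ h
  lift α to ℤˣ using Int.isUnit_iff.mpr hα
  lift β to ℤˣ using Int.isUnit_iff.mpr hβ
  lift γ to ℤˣ using Int.isUnit_iff.mpr hγ
  lift δ to ℤˣ using Int.isUnit_iff.mpr hδ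
  exact hadEquiv_HBlock_smul w x y z a b r s t α β γ δ (Units.ext (by push_cast; exact h))

/-- Proposition 4.4(a): if `H = 𝓗(W,X,Y,Z)^{a,b}_{r,s,t}` is a Hadamard
matrix, then `H` is Hadamard equivalent to `𝓗(Y,Z,W,X)`, `𝓗(X,W,Z,Y)`, `𝓗(Z,Y,X,W)`
(same flags and parameters), and to `𝓗(αW,βX,γY,δZ)` for any signs `α,β,γ,δ` with
`αβγδ = 1`. -/
theorem stmt6 (p : ℕ) [NeZero p] (hp : p.Prime) (hp3 : 3 < p)
    (w x y z : ZMod p → ℤ)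
    (hw : ∀ i, w i = 1 ∨ w i = -1) (hx : ∀ i, x i = 1 ∨ x i = -1)
    (hy : ∀ i, y i = 1 ∨ y i = -1) (hz : ∀ i, z i = 1 ∨ z i = -1)
    (a b : Flg) (r s t : ℕ) (hr : r ≤ 1) (hs : s ≤ 1) (ht : t ≤ 1)
    (hHad : _root_.IsHadamard (HBlock w x y z a b r s t)) :
    HadEquiv (HBlock w x y z a b r s t) (HBlock y z w x a b r s t) ∧
    HadEquiv (HBlock w x y z a b r s t) (HBlock x w z y a b r s t) ∧
    HadEquiv (HBlock w x y z a b r s t) (HBlock z y x w a b r s t) ∧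
    ∀ α β γ δ : ℤ, (α = 1 ∨ α = -1) → (β = 1 ∨ β = -1) →
      (γ = 1 ∨ γ = -1) → (δ = 1 ∨ δ = -1) → α * β * γ * δ = 1 →
      HadEquiv (HBlock w x y z a b r s t)
        (HBlock (α • w) (β • x) (γ • y) (δ • z) a b r s t) :=
  stmt6_general p w x y z a b r s t
end

section
/- Let p > 3 be a prime, let w,x,y,z : ZMod p → {−1,1}, let a,b ∈ {τ,ι} be flags, and suppose H = 𝓗(W,X,Y,Z)^{a,b}_{1,1,1} is a Hadamard matrix (W = BC(w), etc.). If (a,b) = (τ,τ), then there exist circulant p×p matrices W', X', Y', Z' with entries in {−1,1} such that H is Hadamard equivalent to the Williamson-form block matrix [[W',X',Y',Z'],[X',−W',Z',−Y'],[Y',−Z',−W',X'],[Z',Y',−X',−W']]. If (a,b) ≠ (τ,τ), then there exist circulant p×p matrices W', X', Y', Z' with entries in {−1,1} such that Hᵀ is Hadamard equivalent to the Ito-form block matrix [[W',X',Y',Z'],[X',−W',Z',−Y'],[Y'ᵀ,−Z'ᵀ,−W'ᵀ,X'ᵀ],[Z'ᵀ,Y'ᵀ,−X'ᵀ,−W'ᵀ]].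 -/
open Matrix

/-- The Williamson-form block matrix. -/
def WilForm {p : ℕ} (W X Y Z : Matrix (ZMod p) (ZMod p) ℤ) :
    Matrix (Fin 4 × ZMod p) (Fin 4 × ZMod p) ℤ :=
  Matrix.of fun ik jl =>
    (!![W, X, Y, Z;
        X, -W, Z, -Y;
        Y, -Z, -W, X;
        Z, Y, -X, -W] ik.1 jl.1) ik.2 jl.2

/-- The Ito-form block matrix. -/
def ItoForm {p : ℕ} (W X Y Z : Matrix (ZMod p) (ZMod p) ℤ) :
    Matrix (Fin 4 × ZMod p) (Fin 4 × ZMod p) ℤ :=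
  Matrix.of fun ik jl =>
    (!![W, X, Y, Z;
        X, -W, Z, -Y;
        Yᵀ, -Zᵀ, -Wᵀ, Xᵀ;
        Zᵀ, Yᵀ, -Xᵀ, -Wᵀ] ik.1 jl.1) ik.2 jl.2

/-!
`BC u` is `Cir u` with its rows re-indexed by `i ↦ -i`, and it is symmetric. With `r = s = t = 1`
and `(a, b) = (τ, τ)` every block of `H` is `±BC`, in the Williamson pattern, so reversing the row
index inside every block row turns `H` into a Williamson array of circulants. Otherwise the blocks
of `Hᵀ` are back-circulant in two block rows and transposed circulants in the other two; after
reversing the row index in the back-circulant block rows, a permutation of block rows and columns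
and possibly a sign change of one block row and column (absorbed by negating one of the
defining vectors) bring `Hᵀ` to Ito form.
-/

theorem HadEquiv.of_apply_eq {n : Type*} [Fintype n] [DecidableEq n] {A B : Matrix n n ℤ}
    (σ τ : Equiv.Perm n) (ε δ : n → ℤ)
    (hε : ∀ i, ε i = 1 ∨ ε i = -1) (hδ : ∀ j, δ j = 1 ∨ δ j = -1)
    (h : ∀ i j, A i j = ε i * B (σ i) (τ j) * δ j) : HadEquiv A B := by
  refine ⟨of fun i k => if σ i = k then ε i else 0,
    of fun k j => if τ.symm k = j then δ (τ.symm k) else 0,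
    ⟨σ, ε, hε, rfl⟩, ⟨τ.symm, fun k => δ (τ.symm k), fun k => hδ _, rfl⟩, ?_⟩
  ext i j
  simp [h, Matrix.mul_apply, Equiv.symm_apply_eq, mul_assoc]

theorem HadEquiv.of_block_apply_eq {m n : Type*} [Fintype m] [DecidableEq m] [Fintype n]
    [DecidableEq n] {A B : Matrix (m × n) (m × n) ℤ} (f g : Equiv.Perm m)
    (e : m → Equiv.Perm n) (ε δ : m → ℤ)
    (hε : ∀ k, ε k = 1 ∨ ε k = -1) (hδ : ∀ l, δ l = 1 ∨ δ l = -1)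
    (h : ∀ k l i j, A (k, i) (l, j) = ε k * B (f k, e k i) (g l, j) * δ l) : HadEquiv A B :=
  HadEquiv.of_apply_eq (Equiv.prodShear f e) (Equiv.prodCongr g (Equiv.refl n))
    (fun ki => ε ki.1) (fun lj => δ lj.1) (fun _ => hε _) (fun _ => hδ _)
    fun _ _ => h _ _ _ _

theorem neg_apply_eq_one_or_neg_one {ι : Type*} {u : ι → ℤ} (hu : ∀ i, u i = 1 ∨ u i = -1) (i : ι) :
    (-u) i = 1 ∨ (-u) i = -1 := by
  rcases hu i with h | h <;> simp [h]

section Blocks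

variable {p : ℕ} [NeZero p] (w x y z : ZMod p → ℤ)

theorem hadEquiv_HBlock_tau_tau :
    HadEquiv (HBlock w x y z .tau .tau 1 1 1) (WilForm (Cir w) (Cir x) (Cir y) (Cir z)) := by
  refine HadEquiv.of_block_apply_eq (Equiv.refl _) (Equiv.refl _) (fun _ => Equiv.neg _) 1 1
    (fun _ => .inl rfl) (fun _ => .inl rfl) ?_
  intro k l i j
  fin_cases k <;> fin_cases l <;>
    simp only [HBlock, WilForm, flagM, BC, Cir, of_apply, cons_val, Fin.reduceFinMk, Fin.isValue,
      Matrix.smul_apply, Matrix.neg_apply, Pi.one_apply, Equiv.refl_apply, Equiv.neg_apply,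
      pow_one, smul_eq_mul] <;>
    ring_nf

theorem hadEquiv_transpose_HBlock_tau_iota :
    HadEquiv (HBlock w x y z .tau .iota 1 1 1)ᵀ (ItoForm (Cir w) (Cir x) (Cir y) (Cir (-z))) := by
  refine HadEquiv.of_block_apply_eq (Equiv.refl _) (Equiv.refl _)
    ![Equiv.neg _, Equiv.neg _, Equiv.refl _, Equiv.refl _] ![1, 1, 1, -1] ![1, 1, 1, -1]
    (by intro k; fin_cases k <;> simp) (by intro l; fin_cases l <;> simp) ?_
  intro k l i j
  fin_cases k <;> fin_cases l <;>
    simp only [HBlock, ItoForm, flagM, BC, Cir, of_apply, transpose_apply, cons_val,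
      Fin.reduceFinMk, Fin.isValue, Matrix.smul_apply, Matrix.neg_apply, Pi.neg_apply,
      Equiv.refl_apply, Equiv.neg_apply, pow_one, smul_eq_mul] <;>
    ring_nf

theorem hadEquiv_transpose_HBlock_iota_tau :
    HadEquiv (HBlock w x y z .iota .tau 1 1 1)ᵀ (ItoForm (Cir w) (Cir y) (Cir x) (Cir z)) := by
  refine HadEquiv.of_block_apply_eq (Equiv.swap 1 2) (Equiv.swap 1 2)
    ![Equiv.neg _, Equiv.refl _, Equiv.neg _, Equiv.refl _] 1 1
    (fun _ => .inl rfl) (fun _ => .inl rfl) ?_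
  intro k l i j
  fin_cases k <;> fin_cases l <;>
    simp only [HBlock, ItoForm, flagM, BC, Cir, of_apply, transpose_apply, cons_val,
      Fin.reduceFinMk, Fin.isValue, Matrix.smul_apply, Matrix.neg_apply, Pi.one_apply,
      Equiv.swap_apply_left, Equiv.swap_apply_right, Equiv.swap_apply_of_ne_of_ne, ne_eq,
      Fin.reduceEq, not_false_eq_true, Equiv.refl_apply, Equiv.neg_apply, pow_one,
      smul_eq_mul] <;>
    ring_nf

theorem hadEquiv_transpose_HBlock_iota_iota :
    HadEquiv (HBlock w x y z .iota .iota 1 1 1)ᵀ (ItoForm (Cir w) (Cir z) (Cir x) (Cir (-y))) := by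
  refine HadEquiv.of_block_apply_eq (Equiv.swap 1 3 * Equiv.swap 1 2)
    (Equiv.swap 1 3 * Equiv.swap 1 2)
    ![Equiv.neg _, Equiv.refl _, Equiv.refl _, Equiv.neg _] ![1, 1, -1, 1] ![1, 1, -1, 1]
    (by intro k; fin_cases k <;> simp) (by intro l; fin_cases l <;> simp) ?_
  intro k l i j
  fin_cases k <;> fin_cases l <;>
    simp only [HBlock, ItoForm, flagM, BC, Cir, of_apply, transpose_apply, cons_val,
      Fin.reduceFinMk, Fin.isValue, Matrix.smul_apply, Matrix.neg_apply, Pi.neg_apply,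
      Equiv.Perm.mul_apply, Equiv.swap_apply_left, Equiv.swap_apply_right,
      Equiv.swap_apply_of_ne_of_ne, ne_eq, Fin.reduceEq, not_false_eq_true, Equiv.refl_apply,
      Equiv.neg_apply, pow_one, smul_eq_mul] <;>
    ring_nf

end Blocks

theorem stmt8_general (p : ℕ) [NeZero p]
    (w x y z : ZMod p → ℤ)
    (hw : ∀ i, w i = 1 ∨ w i = -1) (hx : ∀ i, x i = 1 ∨ x i = -1)
    (hy : ∀ i, y i = 1 ∨ y i = -1) (hz : ∀ i, z i = 1 ∨ z i = -1)
    (a b : Flg) :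
    (a = Flg.tau ∧ b = Flg.tau →
      ∃ w' x' y' z' : ZMod p → ℤ,
        (∀ i, w' i = 1 ∨ w' i = -1) ∧ (∀ i, x' i = 1 ∨ x' i = -1) ∧
        (∀ i, y' i = 1 ∨ y' i = -1) ∧ (∀ i, z' i = 1 ∨ z' i = -1) ∧
        HadEquiv (HBlock w x y z a b 1 1 1)
          (WilForm (Cir w') (Cir x') (Cir y') (Cir z'))) ∧
    (¬(a = Flg.tau ∧ b = Flg.tau) →
      ∃ w' x' y' z' : ZMod p → ℤ,
        (∀ i, w' i = 1 ∨ w' i = -1) ∧ (∀ i, x' i = 1 ∨ x' i = -1) ∧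
        (∀ i, y' i = 1 ∨ y' i = -1) ∧ (∀ i, z' i = 1 ∨ z' i = -1) ∧
        HadEquiv (HBlock w x y z a b 1 1 1)ᵀ
          (ItoForm (Cir w') (Cir x') (Cir y') (Cir z'))) := by
  refine ⟨?_, fun hab => ?_⟩
  · rintro ⟨rfl, rfl⟩
    exact ⟨w, x, y, z, hw, hx, hy, hz, hadEquiv_HBlock_tau_tau w x y z⟩
  · cases a <;> cases b
    · exact absurd ⟨rfl, rfl⟩ hab
    · exact ⟨w, x, y, -z, hw, hx, hy, neg_apply_eq_one_or_neg_one hz,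
        hadEquiv_transpose_HBlock_tau_iota w x y z⟩
    · exact ⟨w, y, x, z, hw, hy, hx, hz, hadEquiv_transpose_HBlock_iota_tau w x y z⟩
    · exact ⟨w, z, x, -y, hw, hz, hx, neg_apply_eq_one_or_neg_one hy,
        hadEquiv_transpose_HBlock_iota_iota w x y z⟩

/-- Proposition 4.4(b), second part: if `H = 𝓗(W,X,Y,Z)^{a,b}_{1,1,1}`
is Hadamard and `(a,b) = (τ,τ)`, then `H` is Hadamard equivalent to a Williamson-form
matrix with circulant `±1` blocks; if `(a,b) ≠ (τ,τ)`, then `Hᵀ` is Hadamard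
equivalent to an Ito-form matrix with circulant `±1` blocks. -/
theorem stmt8 (p : ℕ) [NeZero p] (hp : p.Prime) (hp3 : 3 < p)
    (w x y z : ZMod p → ℤ)
    (hw : ∀ i, w i = 1 ∨ w i = -1) (hx : ∀ i, x i = 1 ∨ x i = -1)
    (hy : ∀ i, y i = 1 ∨ y i = -1) (hz : ∀ i, z i = 1 ∨ z i = -1)
    (a b : Flg)
    (hHad : _root_.IsHadamard (HBlock w x y z a b 1 1 1)) :
    (a = Flg.tau ∧ b = Flg.tau →
      ∃ w' x' y' z' : ZMod p → ℤ,
        (∀ i, w' i = 1 ∨ w' i = -1) ∧ (∀ i, x' i = 1 ∨ x' i = -1) ∧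
        (∀ i, y' i = 1 ∨ y' i = -1) ∧ (∀ i, z' i = 1 ∨ z' i = -1) ∧
        HadEquiv (HBlock w x y z a b 1 1 1)
          (WilForm (Cir w') (Cir x') (Cir y') (Cir z'))) ∧
    (¬(a = Flg.tau ∧ b = Flg.tau) →
      ∃ w' x' y' z' : ZMod p → ℤ,
        (∀ i, w' i = 1 ∨ w' i = -1) ∧ (∀ i, x' i = 1 ∨ x' i = -1) ∧
        (∀ i, y' i = 1 ∨ y' i = -1) ∧ (∀ i, z' i = 1 ∨ z' i = -1) ∧
        HadEquiv (HBlock w x y z a b 1 1 1)ᵀ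
          (ItoForm (Cir w') (Cir x') (Cir y') (Cir z'))) :=
  stmt8_general p w x y z hw hx hy hz a b
end

section
/- Let p > 3 be a prime, let w,x,y,z : ZMod p → {−1,1}, let a,b ∈ {τ,ι} be flags and r,s,t ∈ {0,1}, and suppose H = 𝓗(W,X,Y,Z)^{a,b}_{r,s,t} is a Hadamard matrix (W = BC(w), etc.). Then W·Wᵀ + X·Xᵀ + Y·Yᵀ + Z·Zᵀ = 4p·I_p (independently of the flags a, b and parameters r, s, t). -/
open Matrix

/-!
Compare the `(0, 0)` blocks of `H Hᵀ = 4p I`: the first block row of `H` is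
`[W, X^a, Y^b, Z^{ab}]`, so that block is `W Wᵀ + X^a (X^a)ᵀ + Y^b (Y^b)ᵀ + Z^{ab} (Z^{ab})ᵀ`.
A circulant and a back-circulant matrix with the same first row `u` have the same Gram
matrix: both have `(i, j)` entry the periodic autocorrelation `∑ₖ u k * u (k + d)` at
`d = ±(j - i)`, which is even in `d`.
-/

theorem Cir_mul_transpose {p : ℕ} [NeZero p] (u : ZMod p → ℤ) :
    Cir u * (Cir u)ᵀ = BC u * (BC u)ᵀ := by
  ext i j
  simp only [mul_apply, transpose_apply, Cir, BC, of_apply]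
  exact Fintype.sum_equiv (Equiv.subRight (i + j)) _ _ fun k => by
    rw [Equiv.subRight_apply, mul_comm]
    ring_nf

theorem flagM_mul_transpose {p : ℕ} [NeZero p] (c : Flg) (u : ZMod p → ℤ) :
    flagM c u * (flagM c u)ᵀ = BC u * (BC u)ᵀ := by
  cases c with
  | tau => rfl
  | iota => exact Cir_mul_transpose u

theorem Matrix.comp_mul_transpose_apply {ι κ R : Type*} [Fintype ι] [Fintype κ]
    [CommSemiring R] (B : Matrix ι ι (Matrix κ κ R)) (i j : ι) (k l : κ) :
    (comp ι ι κ κ R B * (comp ι ι κ κ R B)ᵀ) (i, k) (j, l) = (∑ m, B i m * (B j m)ᵀ) k l := by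
  simp only [mul_apply, transpose_apply, comp_apply, Fintype.sum_prod_type, sum_apply]

theorem HBlock_mul_transpose_apply_zero {p : ℕ} [NeZero p] (w x y z : ZMod p → ℤ)
    (a b : Flg) (r s t : ℕ) (k l : ZMod p) :
    (HBlock w x y z a b r s t * (HBlock w x y z a b r s t)ᵀ) (0, k) (0, l) =
      (BC w * (BC w)ᵀ + BC x * (BC x)ᵀ + BC y * (BC y)ᵀ + BC z * (BC z)ᵀ) k l := by
  rw [show HBlock w x y z a b r s t = comp _ _ _ _ _ _ from rfl, comp_mul_transpose_apply,
    Fin.sum_univ_four]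
  simp [flagM_mul_transpose]

theorem stmt16_general (p : ℕ) [NeZero p]
    (w x y z : ZMod p → ℤ)
    (a b : Flg) (r s t : ℕ)
    (hHad : _root_.IsHadamard (HBlock w x y z a b r s t)) :
    BC w * (BC w)ᵀ + BC x * (BC x)ᵀ + BC y * (BC y)ᵀ + BC z * (BC z)ᵀ
      = (4 * (p : ℤ)) • (1 : Matrix (ZMod p) (ZMod p) ℤ) := by
  ext k l
  have hkl := congr($(hHad.2) (0, k) (0, l))
  rw [HBlock_mul_transpose_apply_zero] at hkl
  rw [hkl]
  simp [one_apply]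

/-- equation (5.1): if `H = 𝓗(W,X,Y,Z)^{a,b}_{r,s,t}` is a Hadamard
matrix, then `W·Wᵀ + X·Xᵀ + Y·Yᵀ + Z·Zᵀ = 4p·I_p`, independently of the flags `a, b`
and the parameters `r, s, t`. -/
theorem stmt16 (p : ℕ) [NeZero p] (hp : p.Prime) (hp3 : 3 < p)
    (w x y z : ZMod p → ℤ)
    (hw : ∀ i, w i = 1 ∨ w i = -1) (hx : ∀ i, x i = 1 ∨ x i = -1)
    (hy : ∀ i, y i = 1 ∨ y i = -1) (hz : ∀ i, z i = 1 ∨ z i = -1)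
    (a b : Flg) (r s t : ℕ) (hr : r ≤ 1) (hs : s ≤ 1) (ht : t ≤ 1)
    (hHad : _root_.IsHadamard (HBlock w x y z a b r s t)) :
    BC w * (BC w)ᵀ + BC x * (BC x)ᵀ + BC y * (BC y)ᵀ + BC z * (BC z)ᵀ
      = (4 * (p : ℤ)) • (1 : Matrix (ZMod p) (ZMod p) ℤ) :=
  stmt16_general p w x y z a b r s t hHad
end

section
/- Let p > 3 be a prime and let w, x, y, z be nonzero integers satisfying w² + x² + y² + z² = 4p and w·z = x·y. Then either (w² + x² = 2p and y² + z² = 2p) or (w² + y² = 2p and x² + z² = 2p); in particular p ≡ 1 (mod 4). -/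
/-!
Since `w ∣ x * y`, the solutions of `w * z = x * y` with `w ≠ 0` are `w = a c`, `x = a d`,
`y = b c`, `z = b d`, and then `w² + x² + y² + z² = (a² + b²)(c² + d²)`. Both factors are sums of
two nonzero squares, so they are at least `2` and differ from `4`; as their product is `4p`, one
of them is `2` and the other `2p`. A factor `2` forces the corresponding pair of squares to be
`1, 1`, which gives the two splittings of `4p`. Finally `c² + d² = 2p` with `p` odd forces
`c, d` odd, so `2p ≡ 2 (mod 8)`.
-/

lemma Int.exists_eq_mul_of_mul_eq_mul {w x y z : ℤ} (hw : w ≠ 0) (h : w * z = x * y) :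
    ∃ a b c d : ℤ, w = a * c ∧ x = a * d ∧ y = b * c ∧ z = b * d := by
  obtain ⟨a, c, ⟨d, rfl⟩, ⟨b, rfl⟩, rfl⟩ := exists_dvd_and_dvd_of_dvd_mul ⟨z, h.symm⟩
  refine ⟨a, b, c, d, rfl, rfl, mul_comm c b, ?_⟩
  exact mul_left_cancel₀ hw (by linear_combination h)

section SumOfTwoNonzeroSquares

variable {a b : ℤ}

lemma Int.two_le_sq_add_sq (ha : a ≠ 0) (hb : b ≠ 0) : 2 ≤ a ^ 2 + b ^ 2 := by
  have : 0 < a ^ 2 := by positivity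
  have : 0 < b ^ 2 := by positivity
  linarith

lemma Int.sq_eq_one_of_sq_add_sq_eq_two (ha : a ≠ 0) (hb : b ≠ 0) (h : a ^ 2 + b ^ 2 = 2) :
    a ^ 2 = 1 ∧ b ^ 2 = 1 := by
  have : 0 < a ^ 2 := by positivity
  have : 0 < b ^ 2 := by positivity
  constructor <;> linarith

lemma Int.sq_add_sq_ne_four (ha : a ≠ 0) (hb : b ≠ 0) : a ^ 2 + b ^ 2 ≠ 4 := by
  intro h
  have : 0 < a ^ 2 := by positivity
  have : 0 < b ^ 2 := by positivity
  have : |a| ≤ 1 := by nlinarith [sq_abs a]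
  have : |b| ≤ 1 := by nlinarith [sq_abs b]
  nlinarith [sq_abs a, sq_abs b, abs_nonneg a, abs_nonneg b]

end SumOfTwoNonzeroSquares

lemma Int.sq_emod_eight (c : ℤ) : c ^ 2 % 8 = 0 ∨ c ^ 2 % 8 = 1 ∨ c ^ 2 % 8 = 4 := by
  have h0 := Int.emod_nonneg c (by norm_num : (8 : ℤ) ≠ 0)
  have h8 := Int.emod_lt_of_pos c (by norm_num : (0 : ℤ) < 8)
  rw [sq, Int.mul_emod]
  interval_cases c % 8 <;> simp

lemma Odd.emod_four_eq_one_of_sq_add_sq_eq_two_mul {n : ℕ} (hn : Odd n) {c d : ℤ}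
    (h : c ^ 2 + d ^ 2 = 2 * n) : n % 4 = 1 := by
  have := Int.sq_emod_eight c
  have := Int.sq_emod_eight d
  have := Nat.odd_iff.mp hn
  omega

lemma Nat.Prime.emod_four_eq_one_of_sq_add_sq_eq_two_mul {p : ℕ} (hp : p.Prime) {c d : ℤ}
    (hc : c ≠ 0) (hd : d ≠ 0) (h : c ^ 2 + d ^ 2 = 2 * p) : p % 4 = 1 := by
  refine (hp.eq_two_or_odd'.resolve_left ?_).emod_four_eq_one_of_sq_add_sq_eq_two_mul h
  rintro rfl
  exact Int.sq_add_sq_ne_four hc hd h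

lemma eq_two_of_mul_eq_four {k N : ℤ} (h : k * N = 4) (hN : 2 ≤ N) (hN4 : N ≠ 4) :
    k = 2 ∧ N = 2 := by
  have : N ≤ 4 := Int.le_of_dvd (by norm_num) ⟨k, by linarith⟩
  interval_cases N <;> omega

lemma eq_two_or_eq_two_of_mul_eq_four_mul_prime {p M N : ℤ} (hp : Prime p)
    (hM : 2 ≤ M) (hN : 2 ≤ N) (hM4 : M ≠ 4) (hN4 : N ≠ 4) (h : M * N = 4 * p) :
    (M = 2 ∧ N = 2 * p) ∨ (M = 2 * p ∧ N = 2) := by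
  rcases hp.dvd_mul.mp ⟨4, by rw [h, mul_comm]⟩ with ⟨k, rfl⟩ | ⟨k, rfl⟩
  · have hkN : k * N = 4 := mul_left_cancel₀ hp.ne_zero (by linear_combination h)
    obtain ⟨rfl, rfl⟩ := eq_two_of_mul_eq_four hkN hN hN4
    exact Or.inr ⟨mul_comm _ _, rfl⟩
  · have hkM : k * M = 4 := mul_left_cancel₀ hp.ne_zero (by linear_combination h)
    obtain ⟨rfl, rfl⟩ := eq_two_of_mul_eq_four hkM hM hM4
    exact Or.inl ⟨rfl, mul_comm _ _⟩

theorem stmt17_general (p : ℕ) (hp : p.Prime) (w x y z : ℤ)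
    (hw : w ≠ 0) (hx : x ≠ 0) (hz : z ≠ 0)
    (hsum : w ^ 2 + x ^ 2 + y ^ 2 + z ^ 2 = 4 * (p : ℤ))
    (hprod : w * z = x * y) :
    ((w ^ 2 + x ^ 2 = 2 * (p : ℤ) ∧ y ^ 2 + z ^ 2 = 2 * (p : ℤ)) ∨
     (w ^ 2 + y ^ 2 = 2 * (p : ℤ) ∧ x ^ 2 + z ^ 2 = 2 * (p : ℤ))) ∧
    p % 4 = 1 := by
  obtain ⟨a, b, c, d, rfl, rfl, rfl, rfl⟩ := Int.exists_eq_mul_of_mul_eq_mul hw hprod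
  obtain ⟨ha, hc⟩ := mul_ne_zero_iff.mp hw
  obtain ⟨-, hd⟩ := mul_ne_zero_iff.mp hx
  obtain ⟨hb, -⟩ := mul_ne_zero_iff.mp hz
  have hfactor : (a ^ 2 + b ^ 2) * (c ^ 2 + d ^ 2) = 4 * (p : ℤ) := by
    linear_combination hsum
  rcases eq_two_or_eq_two_of_mul_eq_four_mul_prime (Nat.prime_iff_prime_int.mp hp)
      (Int.two_le_sq_add_sq ha hb) (Int.two_le_sq_add_sq hc hd)
      (Int.sq_add_sq_ne_four ha hb) (Int.sq_add_sq_ne_four hc hd) hfactor with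
    ⟨hab, hcd⟩ | ⟨hab, hcd⟩
  · obtain ⟨ha1, hb1⟩ := Int.sq_eq_one_of_sq_add_sq_eq_two ha hb hab
    refine ⟨Or.inl ⟨?_, ?_⟩, hp.emod_four_eq_one_of_sq_add_sq_eq_two_mul hc hd hcd⟩
    · linear_combination (c ^ 2 + d ^ 2) * ha1 + hcd
    · linear_combination (c ^ 2 + d ^ 2) * hb1 + hcd
  · obtain ⟨hc1, hd1⟩ := Int.sq_eq_one_of_sq_add_sq_eq_two hc hd hcd
    refine ⟨Or.inr ⟨?_, ?_⟩, hp.emod_four_eq_one_of_sq_add_sq_eq_two_mul ha hb hab⟩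
    · linear_combination (a ^ 2 + b ^ 2) * hc1 + hab
    · linear_combination (a ^ 2 + b ^ 2) * hd1 + hab

/-- if `p > 3` is prime and `w, x, y, z` are nonzero integers with
`w² + x² + y² + z² = 4p` and `w·z = x·y`, then either `w² + x² = 2p` and
`y² + z² = 2p`, or `w² + y² = 2p` and `x² + z² = 2p`; in particular `p ≡ 1 (mod 4)`. -/
theorem stmt17 (p : ℕ) (hp : p.Prime) (hp3 : 3 < p) (w x y z : ℤ)
    (hw : w ≠ 0) (hx : x ≠ 0) (hy : y ≠ 0) (hz : z ≠ 0)
    (hsum : w ^ 2 + x ^ 2 + y ^ 2 + z ^ 2 = 4 * (p : ℤ))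
    (hprod : w * z = x * y) :
    ((w ^ 2 + x ^ 2 = 2 * (p : ℤ) ∧ y ^ 2 + z ^ 2 = 2 * (p : ℤ)) ∨
     (w ^ 2 + y ^ 2 = 2 * (p : ℤ) ∧ x ^ 2 + z ^ 2 = 2 * (p : ℤ))) ∧
    p % 4 = 1 :=
  stmt17_general p hp w x y z hw hx hz hsum hprod
end
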